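/- For all integers λ1, λ2, β1, β2 with λ1 ≥ 0, λ2 ≥ 0, −λ1 − λ2 + β2 ≥ 0, λ1 + 2λ2 − β2 ≥ 0, −λ1 − 2λ2 + β1 ≥ 0 and −2λ2 − β1 + 2β2 ≥ 0, one has N(λ1, λ2, β1, β2) = 1 + 3λ2 + (3/2)λ1 − (3/2)β2 + (1/2)λ1² + (1/2)β2² − λ1β2 + 2λ1λ2 − 2λ2β2 + 2λ2². -/

import Mathlib

/-- The number of quadruples `(a22, a11, a12, a13)` of nonnegative integers satisfying
Littelmann's inequalities for `so₅(ℂ)` together with the weight equations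
`a22 + a12 = β1` and `a11 + a13 = β2`.  By Littelmann's results this is the dimension of
the weight space of weight `λ1·ω1 + λ2·ω2 − β1·α1 − β2·α2` in the irreducible
`so₅(ℂ)`-module of highest weight `λ1·ω1 + λ2·ω2`. -/
noncomputable def weightMult (l1 l2 b1 b2 : ℤ) : ℕ :=
  Set.ncard {a : ℤ × ℤ × ℤ × ℤ |
    0 ≤ a.1 ∧ 0 ≤ a.2.1 ∧ 0 ≤ a.2.2.1 ∧ 0 ≤ a.2.2.2 ∧
    2 * a.2.1 ≥ a.2.2.1 ∧
    a.2.2.1 ≥ 2 * a.2.2.2 ∧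
    a.2.2.2 ≤ l2 ∧
    a.2.2.1 ≤ l1 + 2 * a.2.2.2 ∧
    a.2.1 ≤ l2 + a.2.2.1 - 2 * a.2.2.2 ∧
    a.1 ≤ l1 + 2 * a.2.1 - 2 * a.2.2.1 + 2 * a.2.2.2 ∧
    a.1 + a.2.2.1 = b1 ∧
    a.2.1 + a.2.2.2 = b2}

/-!
On this cone the only binding inequalities among Littelmann's are `a13 ≤ λ2`,
`a12 ≤ λ1 + 2 a13` and `a11 ≤ λ2 + a12 − 2 a13`; all the others follow from them. Their three
slacks are nonnegative integers with sum `n = λ1 + 2 λ2 − β2`, and any two of them determine the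
pattern. Hence `N` is the number of lattice points of the triangle `u + v ≤ n`, namely
`(n + 2).choose 2`, which expands to the stated polynomial.
-/

open Finset

def triangle (n : ℕ) : Finset (ℕ × ℕ) :=
  (range (n + 1)).biUnion antidiagonal

theorem mem_triangle {n : ℕ} {p : ℕ × ℕ} : p ∈ triangle n ↔ p.1 + p.2 ≤ n := by
  simp [triangle]

theorem sum_range_succ_eq_choose_two (n : ℕ) :
    ∑ s ∈ range (n + 1), (s + 1) = (n + 2).choose 2 := by
  induction n with
  | zero => rfl
  | succ k ih =>
    rw [sum_range_succ, ih, Nat.choose_succ_succ' (k + 2), Nat.choose_one_right]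
    ring

theorem card_triangle (n : ℕ) : (triangle n).card = (n + 2).choose 2 := by
  have hdisj : ((range (n + 1) : Finset ℕ) : Set ℕ).PairwiseDisjoint antidiagonal :=
    fun s _ t _ hst => disjoint_left.mpr fun p hs ht => hst ((mem_antidiagonal.mp hs).symm.trans
      (mem_antidiagonal.mp ht))
  rw [triangle, card_biUnion hdisj]
  simp only [Nat.card_antidiagonal]
  exact sum_range_succ_eq_choose_two n

/-- The pattern with slack `p.1` in `a11 ≤ λ2 + a12 − 2 a13`, slack `p.2` in `a12 ≤ λ1 + 2 a13`
and slack `n − p.1 − p.2` in `a13 ≤ λ2`, where `n = λ1 + 2 λ2 − β2`. -/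
def slackPattern (l1 l2 b1 b2 : ℤ) (p : ℕ × ℕ) : ℤ × ℤ × ℤ × ℤ :=
  (b1 - (2 * p.1 + p.2 + 2 * b2 - l1 - 2 * l2), b2 - (p.1 + p.2 + b2 - l1 - l2),
    2 * p.1 + p.2 + 2 * b2 - l1 - 2 * l2, p.1 + p.2 + b2 - l1 - l2)

theorem slackPattern_injective (l1 l2 b1 b2 : ℤ) : (slackPattern l1 l2 b1 b2).Injective := by
  intro p q h
  simp only [slackPattern, Prod.mk.injEq] at h
  ext <;> omega

theorem weightMult_eq_card_triangle {l1 l2 b1 b2 : ℤ} {n : ℕ} (hn : (n : ℤ) = l1 + 2 * l2 - b2)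
    (h2 : l1 + l2 ≤ b2) (h4 : l1 + 2 * l2 ≤ b1) (h5 : b1 + 2 * l2 ≤ 2 * b2) :
    weightMult l1 l2 b1 b2 = (triangle n).card := by
  rw [weightMult, ← Set.ncard_coe_finset,
    ← Set.ncard_image_of_injective _ (slackPattern_injective l1 l2 b1 b2)]
  congr 1
  ext ⟨a22, a11, a12, a13⟩
  simp only [Set.mem_ofPred_eq, Set.mem_image, Finset.mem_coe, mem_triangle]
  constructor
  · rintro ⟨-, -, -, -, -, -, h7, h8, h9, -, h11, h12⟩
    obtain ⟨u, hu⟩ := Int.eq_ofNat_of_zero_le (a := a12 - a13 - b2 + l2) (by omega)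
    obtain ⟨v, hv⟩ := Int.eq_ofNat_of_zero_le (a := l1 + 2 * a13 - a12) (by omega)
    refine ⟨(u, v), by omega, ?_⟩
    simp only [slackPattern, Prod.mk.injEq]
    omega
  · rintro ⟨⟨u, v⟩, huv, hp⟩
    simp only [slackPattern, Prod.mk.injEq] at hp
    omega

theorem weightMult_on_cone_f33_general (l1 l2 b1 b2 : ℤ)
    (h2 : 0 ≤ -l1 - l2 + b2)
    (h3 : 0 ≤ l1 + 2*l2 - b2)
    (h4 : 0 ≤ -l1 - 2*l2 + b1)
    (h5 : 0 ≤ -2*l2 - b1 + 2*b2) :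
    (weightMult l1 l2 b1 b2 : ℚ) = 1 + 3*l2 + (3/2)*l1 - (3/2)*b2 + (1/2)*l1^2 + (1/2)*b2^2 - l1*b2 + 2*l1*l2 - 2*l2*b2 + 2*l2^2 := by
  obtain ⟨n, hn⟩ := Int.eq_ofNat_of_zero_le h3
  have hnq : (n : ℚ) = l1 + 2 * l2 - b2 := by exact_mod_cast hn.symm
  rw [weightMult_eq_card_triangle hn.symm (by omega) (by omega) (by omega), card_triangle,
    Nat.cast_choose_two]
  push_cast
  rw [hnq]
  ring

theorem weightMult_on_cone_f33 (l1 l2 b1 b2 : ℤ)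
    (h0 : 0 ≤ l1)
    (h1 : 0 ≤ l2)
    (h2 : 0 ≤ -l1 - l2 + b2)
    (h3 : 0 ≤ l1 + 2*l2 - b2)
    (h4 : 0 ≤ -l1 - 2*l2 + b1)
    (h5 : 0 ≤ -2*l2 - b1 + 2*b2) :
    (weightMult l1 l2 b1 b2 : ℚ) = 1 + 3*l2 + (3/2)*l1 - (3/2)*b2 + (1/2)*l1^2 + (1/2)*b2^2 - l1*b2 + 2*l1*l2 - 2*l2*b2 + 2*l2^2 :=
  weightMult_on_cone_f33_general l1 l2 b1 b2 h2 h3 h4 h5
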